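/- arXiv:0910.0156 — 2 statements merged into one kernel-verified Lean document; each statement's English description precedes it below -/
import Mathlib

section
/- Let (Tᵢ)_{i≥1} be the jump times of a Poisson process with rate α and, independently, (Δᵢ)_{i≥1} i.i.d. with law σ on ℝ^d without atom at 0. Let h : ℝ₊ × ℝ^d → ℝ be measurable such that the shot noise series I = Σ_{i≥1} h(Tᵢ, Δᵢ) converges a.s. If the restriction of the pushforward measure (λ_{ℝ₊} ⊗ σ) h^{−1} to ℝ∖{0} is absolutely continuous with respect to Lebesgue measure, then the restriction of the law of I to ℝ∖{0} is absolutely continuous with respect to Lebesgue measure (the law may have an atom at 0). -/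
/-!
Let `A ⊆ ℝ ∖ {0}` be Lebesgue-null. If `I ∈ A`, some term `h (Tⱼ₊₁, Δⱼ)` is nonzero, so it
suffices to show, for each `j`, that the series has a limit in `A` and a nonzero `j`-th term only
on a null event. Condition on all `(Eₖ, Δₖ)` with `k ∉ {j, j + 1}` and let `s = E₀ + ⋯ + Eⱼ₋₁`,
which is `≥ 0` almost surely. The limit is then `C + h (s + Eⱼ, Δⱼ) + F (Eⱼ + Eⱼ₊₁, Δⱼ₊₁)`.
The laws of `Eⱼ`, `Eⱼ₊₁` are absolutely continuous and the shear `(e, e') ↦ (e, e + e')` preserves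
Lebesgue measure, so `(Eⱼ, Δⱼ)` may be treated as independent of `(Eⱼ + Eⱼ₊₁, Δⱼ₊₁)`. For fixed
values of the latter, `h (s + Eⱼ, Δⱼ)` lies in a null set avoiding `0`; that event is null because
the image of `λ_{ℝ₊} ⊗ σ` under `(e, x) ↦ h (s + e, x)` is the image under `h` of a measure below
`λ_{ℝ₊} ⊗ σ` (translating by `s ≥ 0` maps `λ_{ℝ₊}` into itself).
-/

open MeasureTheory ProbabilityTheory Filter
open scoped ENNReal

/-- Jump times of a Poisson process: partial sums of the interarrival times `E`. -/
noncomputable def jumpTime {Ω : Type*} (E : ℕ → Ω → ℝ) (i : ℕ) (ω : Ω) : ℝ :=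
  ∑ j ∈ Finset.range i, E j ω

open Set Function
open scoped Topology

lemma gammaMeasure_absolutelyContinuous (a r : ℝ) :
    gammaMeasure a r ≪ volume.restrict (Ioi 0) := by
  have hpdf : (Ici 0).indicator (gammaPDF a r) = gammaPDF a r := by
    refine indicator_eq_self.2 fun x hx => ?_
    by_contra hx0
    exact hx (gammaPDF_of_neg (not_le.1 hx0))
  rw [gammaMeasure, ← hpdf, withDensity_indicator measurableSet_Ici,
    Measure.restrict_congr_set Ioi_ae_eq_Ici.symm]
  exact withDensity_absolutelyContinuous _ _

lemma map_const_add_volume_restrict_Ioi_absolutelyContinuous {s : ℝ} (hs : 0 ≤ s) :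
    (volume.restrict (Ioi 0)).map (s + ·) ≪ volume.restrict (Ioi (0 : ℝ)) := by
  have hmp := (measurePreserving_add_left volume s).restrict_preimage (measurableSet_Ioi (a := s))
  rw [preimage_const_add_Ioi, sub_self] at hmp
  rw [hmp.map_eq]
  exact Measure.absolutelyContinuous_of_le (Measure.restrict_mono (Ioi_subset_Ioi hs) le_rfl)

section NullSets

variable {X Y : Type*} [MeasurableSpace X] [MeasurableSpace Y]

lemma map_shift_restrict_compl_zero_absolutelyContinuous {σ : Measure X} [SFinite σ]
    {h : ℝ → X → ℝ} (hh : Measurable (uncurry h))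
    (hac : ((((volume.restrict (Ioi 0)).prod σ).map (uncurry h)).restrict {0}ᶜ) ≪ volume)
    {s : ℝ} (hs : 0 ≤ s) :
    ((((volume.restrict (Ioi 0)).prod σ).map (fun a => h (s + a.1) a.2)).restrict {0}ᶜ)
      ≪ volume := by
  have hshift : ((volume.restrict (Ioi 0)).prod σ).map (Prod.map (s + ·) id)
      ≪ (volume.restrict (Ioi 0)).prod σ := by
    rw [← Measure.map_prod_map _ _ (measurable_const_add s) measurable_id, Measure.map_id]
    exact (map_const_add_volume_restrict_Ioi_absolutelyContinuous hs).prod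
      Measure.AbsolutelyContinuous.rfl
  have hcomp : (fun a : ℝ × X => h (s + a.1) a.2) = uncurry h ∘ Prod.map (s + ·) id := rfl
  rw [hcomp, ← Measure.map_map hh (measurable_const_add s |>.prodMap measurable_id)]
  exact ((hshift.map hh).restrict _).trans hac

lemma measure_prod_setOf_add_mem_eq_zero {ν : Measure X} {ρ : Measure Y} [SFinite ν] [SFinite ρ]
    {g : X → ℝ} (hg : Measurable g) (hν : (ν.map g).restrict {0}ᶜ ≪ volume)
    {F : Y → ℝ} (hF : Measurable F) {A : Set ℝ} (hA : MeasurableSet A) (hA0 : volume A = 0) :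
    (ν.prod ρ) {p | g p.1 ≠ 0 ∧ g p.1 + F p.2 ∈ A} = 0 := by
  have hmeas : MeasurableSet {p : X × Y | g p.1 ≠ 0 ∧ g p.1 + F p.2 ∈ A} :=
    (hg.comp measurable_fst (measurableSet_singleton 0).compl).inter
      ((hg.comp measurable_fst).add (hF.comp measurable_snd) hA)
  rw [Measure.prod_apply_symm hmeas]
  have hslice (y : Y) : ν ((fun x => (x, y)) ⁻¹' {p | g p.1 ≠ 0 ∧ g p.1 + F p.2 ∈ A}) = 0 := by
    have hnull : volume ((· + F y) ⁻¹' A) = 0 := by rwa [measure_preimage_add_right]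
    have := hν hnull
    rw [Measure.restrict_apply (measurable_add_const (F y) hA),
      Measure.map_apply hg ((measurable_add_const (F y) hA).inter
        (measurableSet_singleton 0).compl)] at this
    convert this using 2
    ext x
    simp [and_comm]
  simp only [hslice, lintegral_const, zero_mul]

lemma measurePreserving_shear (ν : Measure (ℝ × X)) [SFinite ν] (τ : Measure Y) [SFinite τ] :
    MeasurePreserving (fun p : (ℝ × X) × (ℝ × Y) => (p.1, (p.1.1 + p.2.1, p.2.2)))
      (ν.prod (volume.prod τ)) (ν.prod (volume.prod τ)) := by
  refine (MeasurePreserving.id ν).skew_product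
    (g := fun (a : ℝ × X) (c : ℝ × Y) => (a.1 + c.1, c.2)) (by fun_prop)
    (Eventually.of_forall fun a => ?_)
  rw [show (fun c : ℝ × Y => (a.1 + c.1, c.2)) = Prod.map (a.1 + ·) id from rfl,
    ← Measure.map_prod_map _ _ (measurable_const_add _) measurable_id, map_add_left_eq_self,
    Measure.map_id]

lemma measure_prod_setOf_shear_add_mem_eq_zero {ν : Measure (ℝ × X)} [SFinite ν]
    {τ : Measure Y} [SFinite τ] {g : ℝ × X → ℝ} (hg : Measurable g)
    (hν : (ν.map g).restrict {0}ᶜ ≪ volume) {F : ℝ × Y → ℝ} (hF : Measurable F)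
    {A : Set ℝ} (hA : MeasurableSet A) (hA0 : volume A = 0) :
    (ν.prod (volume.prod τ)) {p | g p.1 ≠ 0 ∧ g p.1 + F (p.1.1 + p.2.1, p.2.2) ∈ A} = 0 :=
  (measurePreserving_shear ν τ).quasiMeasurePreserving.preimage_null
    (measure_prod_setOf_add_mem_eq_zero hg hν hF hA hA0)

end NullSets

section ShotNoise

variable {X : Type*} (h : ℝ → X → ℝ)

def shotNoiseTerm (t : ℝ) (y : ℕ → ℝ × X) (i : ℕ) : ℝ :=
  h (t + ∑ k ∈ Finset.range (i + 1), (y k).1) (y i).2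

def shotNoisePartialSum (t : ℝ) (y : ℕ → ℝ × X) (n : ℕ) : ℝ :=
  ∑ i ∈ Finset.range n, shotNoiseTerm h t y i

noncomputable def shotNoise (t : ℝ) (y : ℕ → ℝ × X) : ℝ :=
  limUnder atTop (shotNoisePartialSum h t y)

lemma shotNoisePartialSum_add (t : ℝ) (y : ℕ → ℝ × X) (m n : ℕ) :
    shotNoisePartialSum h t y (m + n) = shotNoisePartialSum h t y m +
      shotNoisePartialSum h (t + ∑ k ∈ Finset.range m, (y k).1) (fun k => y (m + k)) n := by
  simp only [shotNoisePartialSum, shotNoiseTerm, Finset.sum_range_add, add_assoc]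

lemma shotNoisePartialSum_succ (t : ℝ) (y : ℕ → ℝ × X) (n : ℕ) :
    shotNoisePartialSum h t y (n + 1) = shotNoisePartialSum h t y n + shotNoiseTerm h t y n :=
  Finset.sum_range_succ _ n

lemma exists_shotNoiseTerm_ne_zero {t l : ℝ} {y : ℕ → ℝ × X}
    (hl : Tendsto (shotNoisePartialSum h t y) atTop (𝓝 l)) (hl0 : l ≠ 0) :
    ∃ i, shotNoiseTerm h t y i ≠ 0 := by
  by_contra! hzero
  refine hl0 (tendsto_nhds_unique hl ?_)
  have hsum : shotNoisePartialSum h t y = fun _ => 0 :=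
    funext fun n => Finset.sum_eq_zero fun i _ => hzero i
  exact hsum ▸ tendsto_const_nhds

variable [MeasurableSpace X]

lemma measurable_shotNoisePartialSum (hh : Measurable (uncurry h)) (n : ℕ) :
    Measurable fun p : ℝ × (ℕ → ℝ × X) => shotNoisePartialSum h p.1 p.2 n :=
  Finset.measurable_sum _ fun i _ => hh.comp
    (f := fun p : ℝ × (ℕ → ℝ × X) => (p.1 + ∑ k ∈ Finset.range (i + 1), (p.2 k).1, (p.2 i).2))
    (by fun_prop)

lemma measurable_shotNoise (hh : Measurable (uncurry h)) :
    Measurable fun p : ℝ × (ℕ → ℝ × X) => shotNoise h p.1 p.2 :=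
  (StronglyMeasurable.limUnder fun n =>
    (measurable_shotNoisePartialSum h hh n).stronglyMeasurable).measurable

lemma measurableSet_exists_tendsto_shotNoisePartialSum_mem (hh : Measurable (uncurry h))
    {A : Set ℝ} (hA : MeasurableSet A) (t : ℝ) (j : ℕ) :
    MeasurableSet {y : ℕ → ℝ × X | ∃ l ∈ A, Tendsto (shotNoisePartialSum h t y) atTop (𝓝 l) ∧
      shotNoiseTerm h t y j ≠ 0} := by
  have hset : {y : ℕ → ℝ × X | ∃ l ∈ A, Tendsto (shotNoisePartialSum h t y) atTop (𝓝 l) ∧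
      shotNoiseTerm h t y j ≠ 0} =
      {y | ∃ l, Tendsto (shotNoisePartialSum h t y) atTop (𝓝 l)} ∩
        (shotNoise h t ⁻¹' A ∩ {y | shotNoiseTerm h t y j ≠ 0}) := by
    ext y
    constructor
    · rintro ⟨l, hlA, hl, hj⟩
      exact ⟨⟨l, hl⟩, by rwa [mem_preimage, shotNoise, hl.limUnder_eq], hj⟩
    · rintro ⟨⟨l, hl⟩, hlA, hj⟩
      exact ⟨l, by rwa [mem_preimage, shotNoise, hl.limUnder_eq] at hlA, hl, hj⟩
  rw [hset]
  refine (measurableSet_exists_tendsto fun n =>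
    (measurable_shotNoisePartialSum h hh n).comp measurable_prodMk_left).inter
    ((((measurable_shotNoise h hh).comp measurable_prodMk_left) hA).inter ?_)
  exact (hh.comp (f := fun y : ℕ → ℝ × X => (t + ∑ k ∈ Finset.range (j + 1), (y k).1, (y j).2))
    (by fun_prop)) (measurableSet_singleton 0).compl

end ShotNoise

section InsertPair

variable {α : Type*}

def insertPair (j : ℕ) (z : ℕ → α) (a b : α) : ℕ → α := fun k =>
  if k < j then z k else if k = j then a else if k = j + 1 then b else z (k - 2)

def removePair (j : ℕ) (y : ℕ → α) : ℕ → α := fun k => y (if k < j then k else k + 2)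

variable (j : ℕ) (z : ℕ → α) (a b : α)

lemma insertPair_apply_of_lt {k : ℕ} (hk : k < j) : insertPair j z a b k = z k := if_pos hk

@[simp] lemma insertPair_apply_self : insertPair j z a b j = a := by simp [insertPair]

@[simp] lemma insertPair_apply_succ : insertPair j z a b (j + 1) = b := by simp [insertPair]

lemma insertPair_apply_add_two (k : ℕ) : insertPair j z a b (j + 2 + k) = z (j + k) := by
  simp [insertPair, show ¬j + 2 + k < j by omega, show j + 2 + k ≠ j by omega,
    show j + 2 + k ≠ j + 1 by omega, show j + 2 + k - 2 = j + k by omega]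

@[simp] lemma insertPair_removePair (y : ℕ → α) :
    insertPair j (removePair j y) (y j) (y (j + 1)) = y := by
  ext k
  simp only [insertPair, removePair]
  split_ifs <;> first | rfl | (congr 1; omega)

lemma measurable_insertPair [MeasurableSpace α] :
    Measurable fun q : (ℕ → α) × α × α => insertPair j q.1 q.2.1 q.2.2 :=
  measurable_pi_lambda _ fun k => by unfold insertPair; split_ifs <;> fun_prop

end InsertPair

section ShotNoiseInsertPair

variable {X : Type*} (h : ℝ → X → ℝ) (t : ℝ) (j : ℕ) (z : ℕ → ℝ × X) (a b : ℝ × X)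

lemma sum_range_fst_insertPair_of_le {m : ℕ} (hm : m ≤ j) :
    ∑ k ∈ Finset.range m, (insertPair j z a b k).1 = ∑ k ∈ Finset.range m, (z k).1 :=
  Finset.sum_congr rfl fun k hk => by
    rw [insertPair_apply_of_lt _ _ _ _ ((Finset.mem_range.1 hk).trans_le hm)]

lemma shotNoiseTerm_insertPair :
    shotNoiseTerm h t (insertPair j z a b) j = h (t + ∑ k ∈ Finset.range j, (z k).1 + a.1) a.2 := by
  rw [shotNoiseTerm, Finset.sum_range_succ, sum_range_fst_insertPair_of_le _ _ _ _ le_rfl,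
    insertPair_apply_self, add_assoc]

lemma shotNoisePartialSum_insertPair (n : ℕ) :
    shotNoisePartialSum h t (insertPair j z a b) (j + 2 + n) =
      shotNoisePartialSum h t z j + h (t + ∑ k ∈ Finset.range j, (z k).1 + a.1) a.2 +
        (h (t + ∑ k ∈ Finset.range j, (z k).1 + (a.1 + b.1)) b.2 +
          shotNoisePartialSum h (t + ∑ k ∈ Finset.range j, (z k).1 + (a.1 + b.1))
            (fun k => z (j + k)) n) := by
  have hprefix : shotNoisePartialSum h t (insertPair j z a b) j = shotNoisePartialSum h t z j :=
    Finset.sum_congr rfl fun i hi => by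
      rw [shotNoiseTerm, shotNoiseTerm, sum_range_fst_insertPair_of_le _ _ _ _ (by grind),
        insertPair_apply_of_lt _ _ _ _ (by grind)]
  have hsum : ∑ k ∈ Finset.range (j + 2), (insertPair j z a b k).1 =
      ∑ k ∈ Finset.range j, (z k).1 + (a.1 + b.1) := by
    rw [Finset.sum_range_succ, Finset.sum_range_succ, sum_range_fst_insertPair_of_le _ _ _ _ le_rfl,
      insertPair_apply_self, insertPair_apply_succ, add_assoc]
  have hnext : shotNoiseTerm h t (insertPair j z a b) (j + 1) =
      h (t + ∑ k ∈ Finset.range j, (z k).1 + (a.1 + b.1)) b.2 := by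
    rw [shotNoiseTerm, show j + 1 + 1 = j + 2 from rfl, hsum, insertPair_apply_succ, add_assoc]
  have htail : (fun k => insertPair j z a b (j + 2 + k)) = fun k => z (j + k) :=
    funext (insertPair_apply_add_two j z a b)
  rw [shotNoisePartialSum_add, hsum, htail, show j + 2 = j + 1 + 1 from rfl,
    shotNoisePartialSum_succ, shotNoisePartialSum_succ, hprefix, shotNoiseTerm_insertPair, hnext,
    ← add_assoc t]
  ring

lemma eq_of_tendsto_shotNoisePartialSum_insertPair {l : ℝ}
    (hl : Tendsto (shotNoisePartialSum h t (insertPair j z a b)) atTop (𝓝 l)) :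
    l = shotNoisePartialSum h t z j + h (t + ∑ k ∈ Finset.range j, (z k).1 + a.1) a.2 +
      (h (t + ∑ k ∈ Finset.range j, (z k).1 + (a.1 + b.1)) b.2 +
        shotNoise h (t + ∑ k ∈ Finset.range j, (z k).1 + (a.1 + b.1)) (fun k => z (j + k))) := by
  set C := shotNoisePartialSum h t z j + h (t + ∑ k ∈ Finset.range j, (z k).1 + a.1) a.2 +
    h (t + ∑ k ∈ Finset.range j, (z k).1 + (a.1 + b.1)) b.2
  have htail : Tendsto (shotNoisePartialSum h (t + ∑ k ∈ Finset.range j, (z k).1 + (a.1 + b.1))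
      (fun k => z (j + k))) atTop (𝓝 (l - C)) := by
    refine ((hl.comp (tendsto_add_atTop_nat (j + 2))).sub_const C).congr fun n => ?_
    rw [comp_apply, add_comm n, shotNoisePartialSum_insertPair]
    ring
  rw [shotNoise, htail.limUnder_eq]
  ring

end ShotNoiseInsertPair

section ShotNoiseNullSets

variable {X : Type*} [MeasurableSpace X]

lemma measure_prod_insertPair_eq_zero {σ : Measure X} [SFinite σ] {μ₁ μ₂ : Measure (ℝ × X)}
    (hμ₁ : μ₁ ≪ (volume.restrict (Ioi 0)).prod σ) (hμ₂ : μ₂ ≪ (volume.restrict (Ioi 0)).prod σ)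
    {h : ℝ → X → ℝ} (hh : Measurable (uncurry h))
    (hac : ((((volume.restrict (Ioi 0)).prod σ).map (uncurry h)).restrict {0}ᶜ) ≪ volume)
    {A : Set ℝ} (hA : MeasurableSet A) (hA0 : volume A = 0)
    {t : ℝ} (j : ℕ) {z : ℕ → ℝ × X} (hz : 0 ≤ t + ∑ k ∈ Finset.range j, (z k).1) :
    (μ₁.prod μ₂) {p | ∃ l ∈ A,
      Tendsto (shotNoisePartialSum h t (insertPair j z p.1 p.2)) atTop (𝓝 l) ∧
        shotNoiseTerm h t (insertPair j z p.1 p.2) j ≠ 0} = 0 := by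
  set s := t + ∑ k ∈ Finset.range j, (z k).1
  have hμ : μ₁.prod μ₂ ≪ ((volume.restrict (Ioi 0)).prod σ).prod (volume.prod σ) :=
    hμ₁.prod (hμ₂.trans ((Measure.absolutelyContinuous_of_le Measure.restrict_le_self).prod
      Measure.AbsolutelyContinuous.rfl))
  have hterm : Measurable fun c : ℝ × X => h (s + c.1) c.2 :=
    hh.comp (((measurable_const_add s).comp measurable_fst).prodMk measurable_snd)
  have hrest : Measurable fun c : ℝ × X => shotNoise h (s + c.1) (fun k => z (j + k)) :=
    (measurable_shotNoise h hh).comp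
      (f := fun c : ℝ × X => (s + c.1, fun k => z (j + k))) (by fun_prop)
  have hF : Measurable fun c : ℝ × X => shotNoisePartialSum h t z j +
      (h (s + c.1) c.2 + shotNoise h (s + c.1) (fun k => z (j + k))) :=
    measurable_const.add (hterm.add hrest)
  have hnull := measure_prod_setOf_shear_add_mem_eq_zero (τ := σ) (g := fun a => h (s + a.1) a.2)
    hterm (map_shift_restrict_compl_zero_absolutelyContinuous hh hac hz) hF hA hA0
  refine hμ (measure_mono_null (fun p hp => ?_) hnull)
  obtain ⟨l, hlA, hl, hj⟩ := hp
  rw [shotNoiseTerm_insertPair] at hj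
  refine ⟨hj, ?_⟩
  convert hlA using 1
  rw [eq_of_tendsto_shotNoisePartialSum_insertPair h t j z p.1 p.2 hl]
  dsimp only [comp_apply, uncurry_apply_pair]
  ring

end ShotNoiseNullSets

section Independence

variable {Ω : Type*} [MeasurableSpace Ω] {P : Measure Ω}

lemma ProbabilityTheory.iIndepFun.indepFun_of_measurable_biSup [IsZeroOrProbabilityMeasure P]
    {ι : Type*} {β : ι → Type*} {m : ∀ i, MeasurableSpace (β i)} {Z : ∀ i, Ω → β i}
    (hZ : ∀ i, Measurable (Z i)) (hind : iIndepFun Z P) (t : Set ι)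
    {γ δ : Type*} [MeasurableSpace γ] [MeasurableSpace δ] {F : Ω → γ} {G : Ω → δ}
    (hF : Measurable[⨆ i ∈ t, (m i).comap (Z i)] F)
    (hG : Measurable[⨆ i ∈ tᶜ, (m i).comap (Z i)] G) :
    IndepFun F G P :=
  (IndepFun_iff_Indep F G P).2 <| indep_of_indep_of_le_right
    (indep_of_indep_of_le_left (indep_biSup_compl (fun i => (hZ i).comap_le) hind t) hF.comap_le)
    hG.comap_le

lemma ProbabilityTheory.iIndepFun.indepFun_pair_removePair [IsZeroOrProbabilityMeasure P]
    {β : Type*} [MeasurableSpace β] {Z : ℕ → Ω → β} (hZ : ∀ k, Measurable (Z k))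
    (hind : iIndepFun Z P) (j : ℕ) :
    IndepFun (fun ω => (Z j ω, Z (j + 1) ω)) (fun ω => removePair j (fun k => Z k ω)) P := by
  have hle (s : Set ℕ) {k : ℕ} (hk : k ∈ s) :
      Measurable[⨆ i ∈ s, MeasurableSpace.comap (Z i) inferInstance] (Z k) :=
    (comap_measurable (Z k)).mono (le_biSup (fun i => MeasurableSpace.comap (Z i) _) hk) le_rfl
  refine hind.indepFun_of_measurable_biSup hZ {j, j + 1}
    ((hle _ (by simp)).prodMk (hle _ (by simp)))
    (@measurable_pi_lambda _ _ _ (⨆ i ∈ ({j, j + 1} : Set ℕ)ᶜ, _) _ _ fun k => hle _ ?_)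
  simp only [mem_compl_iff, mem_insert_iff, mem_singleton_iff]
  split_ifs <;> omega

end Independence

section ShotNoiseProcess

variable {Ω X : Type*} [MeasurableSpace Ω] [MeasurableSpace X] {P : Measure Ω}

lemma ae_fst_nonneg_of_absolutelyContinuous {σ : Measure X} {μ : Measure (ℝ × X)}
    (hμ : μ ≪ (volume.restrict (Ioi 0)).prod σ) : ∀ᵐ p ∂μ, 0 ≤ p.1 :=
  hμ.ae_le (Measure.quasiMeasurePreserving_fst.ae (p := fun x : ℝ => 0 ≤ x)
    ((ae_restrict_mem measurableSet_Ioi).mono fun _ hx => le_of_lt hx))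

lemma measure_exists_tendsto_shotNoisePartialSum_mem_eq_zero [IsProbabilityMeasure P]
    {σ : Measure X} [SFinite σ] {Y : ℕ → Ω → ℝ × X} (hY : ∀ k, Measurable (Y k))
    (hind : iIndepFun Y P) (hlaw : ∀ k, P.map (Y k) ≪ (volume.restrict (Ioi 0)).prod σ)
    {h : ℝ → X → ℝ} (hh : Measurable (uncurry h))
    (hac : ((((volume.restrict (Ioi 0)).prod σ).map (uncurry h)).restrict {0}ᶜ) ≪ volume)
    {A : Set ℝ} (hA : MeasurableSet A) (hA0 : volume A = 0) (j : ℕ) :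
    P {ω | ∃ l ∈ A, Tendsto (shotNoisePartialSum h 0 (fun k => Y k ω)) atTop (𝓝 l) ∧
      shotNoiseTerm h 0 (fun k => Y k ω) j ≠ 0} = 0 := by
  set S := {y : ℕ → ℝ × X | ∃ l ∈ A, Tendsto (shotNoisePartialSum h 0 y) atTop (𝓝 l) ∧
      shotNoiseTerm h 0 y j ≠ 0}
  have hS : MeasurableSet ((fun q : (ℕ → ℝ × X) × (ℝ × X) × (ℝ × X) =>
      insertPair j q.1 q.2.1 q.2.2) ⁻¹' S) :=
    measurable_insertPair j (measurableSet_exists_tendsto_shotNoisePartialSum_mem h hh hA 0 j)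
  set Z : Ω → ℕ → ℝ × X := fun ω => removePair j (fun k => Y k ω)
  set U : Ω → (ℝ × X) × (ℝ × X) := fun ω => (Y j ω, Y (j + 1) ω)
  have hZ : Measurable Z := measurable_pi_lambda _ fun k => hY _
  have hU : Measurable U := (hY j).prodMk (hY (j + 1))
  have hlawU : P.map U = (P.map (Y j)).prod (P.map (Y (j + 1))) :=
    (indepFun_iff_map_prod_eq_prod_map_map (hY j).aemeasurable (hY (j + 1)).aemeasurable).1
      (hind.indepFun (by omega))
  have hlawZU : P.map (fun ω => (Z ω, U ω)) = (P.map Z).prod (P.map U) :=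
    (indepFun_iff_map_prod_eq_prod_map_map hZ.aemeasurable hU.aemeasurable).1
      (hind.indepFun_pair_removePair hY j).symm
  have hY_nonneg : ∀ᵐ ω ∂P, ∀ k, 0 ≤ (Y k ω).1 := ae_all_iff.2 fun k =>
    ae_of_ae_map (hY k).aemeasurable (ae_fst_nonneg_of_absolutelyContinuous (hlaw k))
  have hZ_nonneg : ∀ᵐ z ∂P.map Z, 0 ≤ 0 + ∑ k ∈ Finset.range j, (z k).1 := by
    refine (ae_map_iff hZ.aemeasurable (measurableSet_le measurable_const (by fun_prop))).2 ?_
    filter_upwards [hY_nonneg] with ω hω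
    exact add_nonneg le_rfl (Finset.sum_nonneg fun k _ => hω _)
  have hpre : {ω | ∃ l ∈ A, Tendsto (shotNoisePartialSum h 0 (fun k => Y k ω)) atTop (𝓝 l) ∧
      shotNoiseTerm h 0 (fun k => Y k ω) j ≠ 0} = (fun ω => (Z ω, U ω)) ⁻¹'
        ((fun q : (ℕ → ℝ × X) × (ℝ × X) × (ℝ × X) => insertPair j q.1 q.2.1 q.2.2) ⁻¹' S) := by
    ext ω
    simp [Z, U, S]
  rw [hpre, ← Measure.map_apply (hZ.prodMk hU) hS, hlawZU, Measure.prod_apply hS, hlawU]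
  refine (lintegral_congr_ae ?_).trans lintegral_zero
  filter_upwards [hZ_nonneg] with z hz
  exact measure_prod_insertPair_eq_zero (hlaw j) (hlaw (j + 1)) hh hac hA hA0 j hz

end ShotNoiseProcess

theorem shotNoise_law_restrict_absolutelyContinuous_general {Ω : Type*} [MeasurableSpace Ω]
    (P : Measure Ω) [IsProbabilityMeasure P] (d : ℕ) (α : ℝ)
    (E : ℕ → Ω → ℝ) (Δ : ℕ → Ω → (Fin d → ℝ))
    (hE : ∀ j, Measurable (E j)) (hΔ : ∀ j, Measurable (Δ j))
    (σ : Measure (Fin d → ℝ)) [IsProbabilityMeasure σ]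
    (hindep : iIndepFun (fun j ω => (E j ω, Δ j ω)) P)
    (hlaw : ∀ j, P.map (fun ω => (E j ω, Δ j ω)) = (expMeasure α).prod σ)
    (h : ℝ → (Fin d → ℝ) → ℝ) (hh : Measurable (fun p : ℝ × (Fin d → ℝ) => h p.1 p.2))
    (I : Ω → ℝ) (hI : Measurable I)
    (hconv : ∀ᵐ ω ∂P,
      Tendsto (fun n => ∑ i ∈ Finset.range n, h (jumpTime E (i + 1) ω) (Δ i ω))
        atTop (nhds (I ω)))
    (hac : ((((volume.restrict (Set.Ioi (0 : ℝ))).prod σ).map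
          (fun q : ℝ × (Fin d → ℝ) => h q.1 q.2)).restrict ({0}ᶜ : Set ℝ))
        ≪ (volume : Measure ℝ)) :
    (P.map I).restrict ({0}ᶜ : Set ℝ) ≪ (volume : Measure ℝ) := by
  set Y : ℕ → Ω → ℝ × (Fin d → ℝ) := fun k ω => (E k ω, Δ k ω)
  have hY (k : ℕ) : Measurable (Y k) := (hE k).prodMk (hΔ k)
  have hlawY (k : ℕ) : P.map (Y k) ≪ (volume.restrict (Ioi 0)).prod σ := by
    rw [hlaw k]
    exact (gammaMeasure_absolutelyContinuous 1 α).prod Measure.AbsolutelyContinuous.rfl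
  refine Measure.AbsolutelyContinuous.mk fun s hs hs0 => ?_
  have hA : MeasurableSet (s ∩ {0}ᶜ) := hs.inter (measurableSet_singleton 0).compl
  rw [Measure.restrict_apply hs, Measure.map_apply hI hA]
  refine measure_mono_null_ae ?_ (measure_iUnion_null fun j =>
    measure_exists_tendsto_shotNoisePartialSum_mem_eq_zero hY hindep hlawY hh hac hA
      (measure_mono_null inter_subset_left hs0) j)
  filter_upwards [hconv] with ω hω hIω
  have hω' : Tendsto (shotNoisePartialSum h 0 fun k => Y k ω) atTop (𝓝 (I ω)) := by
    refine hω.congr fun n => ?_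
    simp [shotNoisePartialSum, shotNoiseTerm, jumpTime, Y]
  obtain ⟨j, hj⟩ := exists_shotNoiseTerm_ne_zero h hω' hIω.2
  exact mem_iUnion.2 ⟨j, I ω, hIω, hω', hj⟩

/-- If the restriction to `ℝ∖{0}` of the pushforward `(λ_{ℝ₊} ⊗ σ) h⁻¹` is absolutely
continuous with respect to Lebesgue measure, then the restriction to `ℝ∖{0}` of the law of
the shot noise series `I = Σᵢ h(Tᵢ, Δᵢ)` is absolutely continuous with respect to Lebesgue
measure (the law may have an atom at `0`). The `(Tᵢ)` are the jump times of a Poisson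
process of rate `α` and, independently, the `(Δᵢ)` are i.i.d. with law `σ` without atom
at `0`. -/
theorem shotNoise_law_restrict_absolutelyContinuous {Ω : Type*} [MeasurableSpace Ω]
    (P : Measure Ω) [IsProbabilityMeasure P] (d : ℕ) (α : ℝ) (hα : 0 < α)
    (E : ℕ → Ω → ℝ) (Δ : ℕ → Ω → (Fin d → ℝ))
    (hE : ∀ j, Measurable (E j)) (hΔ : ∀ j, Measurable (Δ j))
    (σ : Measure (Fin d → ℝ)) [IsProbabilityMeasure σ] (hσ0 : σ {0} = 0)
    (hindep : iIndepFun (fun j ω => (E j ω, Δ j ω)) P)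
    (hlaw : ∀ j, P.map (fun ω => (E j ω, Δ j ω)) = (expMeasure α).prod σ)
    (h : ℝ → (Fin d → ℝ) → ℝ) (hh : Measurable (fun p : ℝ × (Fin d → ℝ) => h p.1 p.2))
    (I : Ω → ℝ) (hI : Measurable I)
    (hconv : ∀ᵐ ω ∂P,
      Tendsto (fun n => ∑ i ∈ Finset.range n, h (jumpTime E (i + 1) ω) (Δ i ω))
        atTop (nhds (I ω)))
    (hac : ((((volume.restrict (Set.Ioi (0 : ℝ))).prod σ).map
          (fun q : ℝ × (Fin d → ℝ) => h q.1 q.2)).restrict ({0}ᶜ : Set ℝ))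
        ≪ (volume : Measure ℝ)) :
    (P.map I).restrict ({0}ᶜ : Set ℝ) ≪ (volume : Measure ℝ) :=
  shotNoise_law_restrict_absolutelyContinuous_general P d α E Δ hE hΔ σ hindep hlaw h hh I hI hconv
    hac
end

section
/- Let f : ℝ₊ → ℝ be absolutely continuous on [α, β] with f′(x) ≠ 0 for almost all x ∈ [α, β]. Then the pushforward λ_{[α,β]} f^{−1} is absolutely continuous with respect to Lebesgue measure on ℝ. -/
/-!
At almost every point of `[α, β]` the function `f` is differentiable with nonzero derivative
(Lebesgue differentiation theorem). Near such points `f` is well approximated by invertible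
linear maps, which expand volume by a factor bounded below; cutting the good set into countably
many pieces on which this holds shows that a set of good points with null image is itself null.
-/

open MeasureTheory Filter Set
open scoped NNReal ENNReal

namespace MeasureTheory

variable {E : Type*} [NormedAddCommGroup E] [NormedSpace ℝ E] [FiniteDimensional ℝ E]
  [MeasurableSpace E] [BorelSpace E] (μ : Measure E) [μ.IsAddHaarMeasure]

theorem exists_pos_addHaar_eq_zero_of_approximatesLinearOn {A : E →L[ℝ] E} (hA : A.det ≠ 0) :
    ∃ δ : ℝ≥0, 0 < δ ∧ ∀ (s : Set E) (f : E → E),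
      ApproximatesLinearOn f A s δ → μ (f '' s) = 0 → μ s = 0 := by
  obtain ⟨m, hm0, hm⟩ :=
    ENNReal.lt_iff_exists_nnreal_btwn.1 (ENNReal.ofReal_pos.2 (abs_pos.2 hA))
  obtain ⟨δ, hδ, hδpos⟩ :=
    ((mul_le_addHaar_image_of_lt_det μ A hm).and self_mem_nhdsWithin).exists
  refine ⟨δ, hδpos, fun s f hf hfs => ?_⟩
  have hle := hδ s f hf
  rw [hfs, nonpos_iff_eq_zero, mul_eq_zero] at hle
  exact hle.resolve_left hm0.ne'

theorem addHaar_eq_zero_of_addHaar_image_eq_zero {f : E → E} {f' : E → E →L[ℝ] E}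
    {s : Set E}
    (hf' : ∀ x ∈ s, HasFDerivWithinAt f (f' x) s x) (hdet : ∀ x ∈ s, (f' x).det ≠ 0)
    (hs : μ (f '' s) = 0) : μ s = 0 := by
  rcases s.eq_empty_or_nonempty with rfl | hne
  · exact measure_empty
  -- The partition lemma wants a tolerance for every linear map; singular ones never occur.
  have hδ (A : E →L[ℝ] E) : ∃ δ : ℝ≥0, 0 < δ ∧ (A.det ≠ 0 →
      ∀ (t : Set E) (g : E → E), ApproximatesLinearOn g A t δ →
        μ (g '' t) = 0 → μ t = 0) := by
    by_cases hA : A.det = 0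
    · exact ⟨1, one_pos, (absurd hA ·)⟩
    · exact (exists_pos_addHaar_eq_zero_of_approximatesLinearOn μ hA).imp
        fun _ h => ⟨h.1, fun _ => h.2⟩
  choose δ hδpos hδ using hδ
  obtain ⟨t, A, -, -, hst, hA, hAf'⟩ :=
    exists_partition_approximatesLinearOn_of_hasFDerivWithinAt f s f' hf' δ fun A => (hδpos A).ne'
  refine measure_mono_null ((subset_inter subset_rfl hst).trans (inter_iUnion s t).subset)
    (measure_iUnion_null fun n => ?_)
  obtain ⟨y, hy, hAy⟩ := hAf' hne n
  exact hδ _ (hAy ▸ hdet y hy) _ _ (hA n)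
    (measure_mono_null (image_mono inter_subset_left) hs)

theorem Measure.map_absolutelyContinuous_of_ae_hasFDerivAt {ν : Measure E} (hν : ν ≪ μ)
    {f : E → E} {f' : E → E →L[ℝ] E}
    (hf : ∀ᵐ x ∂ν, HasFDerivAt f (f' x) x ∧ (f' x).det ≠ 0) : ν.map f ≪ μ := by
  by_cases hfm : AEMeasurable f ν
  swap
  · rw [Measure.map_of_not_aemeasurable hfm]
    exact Measure.AbsolutelyContinuous.zero _
  refine Measure.AbsolutelyContinuous.mk fun N hN hN0 => ?_
  set T := {x | HasFDerivAt f (f' x) x ∧ (f' x).det ≠ 0}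
  have hgood : μ (f ⁻¹' N ∩ T) = 0 :=
    addHaar_eq_zero_of_addHaar_image_eq_zero μ (fun x hx => hx.2.1.hasFDerivWithinAt)
      (fun x hx => hx.2.2) (measure_mono_null (image_subset_iff.2 inter_subset_left) hN0)
  rw [Measure.map_apply_of_aemeasurable hfm hN]
  exact measure_mono_null (fun x hx => (em (x ∈ T)).imp (fun h => ⟨hx, h⟩) id)
    (measure_union_null (hν hgood) (ae_iff.1 hf))

end MeasureTheory

theorem ae_restrict_Icc_hasDerivAt_of_eq_add_integral {F : Type*} [NormedAddCommGroup F]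
    [NormedSpace ℝ F] [CompleteSpace F] {f f' : ℝ → F} {a b : ℝ}
    (hf' : IntervalIntegrable f' volume a b)
    (hf : ∀ x ∈ Icc a b, f x = f a + ∫ t in a..x, f' t) :
    ∀ᵐ x ∂volume.restrict (Icc a b), HasDerivAt f (f' x) x := by
  rw [← Measure.restrict_congr_set Ioo_ae_eq_Icc]
  filter_upwards [ae_restrict_mem measurableSet_Ioo,
    ae_restrict_of_ae hf'.ae_hasDerivAt_integral] with x hx hderiv
  have hx' : x ∈ uIcc a b := Icc_subset_uIcc (Ioo_subset_Icc_self hx)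
  exact ((hderiv hx' a left_mem_uIcc).const_add (f a)).congr_of_eventuallyEq
    (eventually_of_mem (Icc_mem_nhds hx.1 hx.2) hf)

theorem map_absolutelyContinuous_of_deriv_ne_zero_general (a b : ℝ) (hab : a ≤ b)
    (f : ℝ → ℝ) (f' : ℝ → ℝ)
    (hf'int : IntegrableOn f' (Set.Icc a b) volume)
    (hfAC : ∀ x ∈ Set.Icc a b, f x = f a + ∫ t in a..x, f' t)
    (hf'ne : ∀ᵐ x ∂volume.restrict (Set.Icc a b), f' x ≠ 0) :
    (volume.restrict (Set.Icc a b)).map f ≪ (volume : Measure ℝ) := by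
  have hderiv := ae_restrict_Icc_hasDerivAt_of_eq_add_integral
    ((intervalIntegrable_iff_integrableOn_Icc_of_le hab).2 hf'int) hfAC
  refine volume.map_absolutelyContinuous_of_ae_hasFDerivAt
    (f' := fun x => (1 : ℝ →L[ℝ] ℝ).smulRight (f' x))
    Measure.restrict_le_self.absolutelyContinuous ?_
  filter_upwards [hderiv, hf'ne] with x hx hx0
  exact ⟨hx.hasFDerivAt, by simpa using hx0⟩

/-- If `f` is absolutely continuous on `[α, β]` (i.e. it is the integral of its integrable
derivative `f'`) with `f'(x) ≠ 0` for almost all `x ∈ [α, β]`, then the pushforward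
`λ_{[α,β]} f⁻¹` is absolutely continuous with respect to Lebesgue measure on `ℝ`. -/
theorem map_absolutelyContinuous_of_deriv_ne_zero (a b : ℝ) (hab : a ≤ b) (ha : 0 ≤ a)
    (f : ℝ → ℝ) (f' : ℝ → ℝ)
    (hf'int : IntegrableOn f' (Set.Icc a b) volume)
    (hfAC : ∀ x ∈ Set.Icc a b, f x = f a + ∫ t in a..x, f' t)
    (hf'ne : ∀ᵐ x ∂volume.restrict (Set.Icc a b), f' x ≠ 0) :
    (volume.restrict (Set.Icc a b)).map f ≪ (volume : Measure ℝ) :=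
  map_absolutelyContinuous_of_deriv_ne_zero_general a b hab f f' hf'int hfAC hf'ne
end
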